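/- Let ρ(p) = p |GHZ⟩⟨GHZ| + ((1−p)/4) |0⟩⟨0|⊗I₄ with |GHZ⟩ = (1/√2)(|000⟩ + |111⟩), 0 < p ≤ 1, and let F_A = diag(x,1), F_B = diag(y,1), F_C = diag(z,1) with x, y, z > 0. Set N = p/2 + ((1−p)/4)x² + ((1−p)/4)x²y² + ((1−p)/4)x²z² + ((1+p)/4)x²y²z² and D = −p/2 + ((1−p)/4)x² − ((1−p)/4)x²y² − ((1−p)/4)x²z² + ((1+p)/4)x²y²z². Then N = tr[(F_A⊗F_B⊗F_C) ρ(p) (F_A⊗F_B⊗F_C)†], and the 3×9 matrix M̃ with entries M̃_{m,(l,n)} = tr[ρ(p)(F_A σ_l F_A ⊗ F_B σ_m F_B ⊗ F_C σ_n F_C)] has exactly the nonzero entries M̃_{111} = pxyz, M̃_{122} = M̃_{212} = M̃_{221} = −pxyz, M̃_{333} = D (indices M̃_{lmn}), and the eigenvalues of M̃ M̃ᵀ are 2p²x²y²z², 2p²x²y²z², D²; hence the correlation matrix of the filtered state ρ' = (F_A⊗F_B⊗F_C) ρ(p) (F_A⊗F_B⊗F_C)†/N has singular values √2 pxyz/N,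 √2 pxyz/N, |D|/N. -/

import Mathlib

open Matrix Polynomial
open scoped Kronecker ComplexOrder

/-- The Pauli matrices σ₁, σ₂, σ₃ (indexed by `Fin 3`). -/
noncomputable def pauli : Fin 3 → Matrix (Fin 2) (Fin 2) ℂ :=
  ![!![0, 1; 1, 0], !![0, -Complex.I; Complex.I, 0], !![1, 0; 0, -1]]

/-- The correlation matrix of a three-qubit state: `M_{j,(i,k)} = tr[ρ(σ_i⊗σ_j⊗σ_k)]`. -/
noncomputable def corrMat (ρ : Matrix (Fin 2 × Fin 2 × Fin 2) (Fin 2 × Fin 2 × Fin 2) ℂ) :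
    Matrix (Fin 3) (Fin 3 × Fin 3) ℝ :=
  fun j ik => ((ρ * (pauli ik.1 ⊗ₖ (pauli j ⊗ₖ pauli ik.2))).trace).re

/-- The vector `|GHZ⟩ = (|000⟩ + |111⟩)/√2`. -/
noncomputable def ghz : Fin 2 × Fin 2 × Fin 2 → ℂ :=
  fun x => if x = (0, 0, 0) ∨ x = (1, 1, 1) then (((Real.sqrt 2)⁻¹ : ℝ) : ℂ) else 0

/-- The rank-one projector `|0⟩⟨0|`. -/
noncomputable def E00 : Matrix (Fin 2) (Fin 2) ℂ := !![1, 0; 0, 0]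

/-- The state `ρ(p) = p|GHZ⟩⟨GHZ| + ((1-p)/4)|0⟩⟨0| ⊗ I₄`. -/
noncomputable def rhoGHZ (p : ℝ) :
    Matrix (Fin 2 × Fin 2 × Fin 2) (Fin 2 × Fin 2 × Fin 2) ℂ :=
  (p : ℂ) • Matrix.vecMulVec ghz (star ghz)
    + (((1 - p) / 4 : ℝ) : ℂ) • (E00 ⊗ₖ (1 : Matrix (Fin 2 × Fin 2) (Fin 2 × Fin 2) ℂ))

/-! Local filters act by conjugation, so by cyclicity of the trace every filtered expectation
value is `tr[ρ (F_A† σ_l F_A ⊗ F_B† σ_m F_B ⊗ F_C† σ_n F_C)]`, and `tr[ρ(p) (A ⊗ B ⊗ C)]` only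
sees the four GHZ corner entries of `A ⊗ B ⊗ C` plus `A₀₀ tr B tr C` from the noise. For
`F = diag(x,1)` the filtered Paulis are `x σ₁`, `x σ₂` and `diag(x², -1)`, which yields the
GHZ sign pattern with entries `±pxyz` and `D`; the three rows of that pattern are orthogonal,
so `M̃ M̃ᵀ` is diagonal, and normalising by `N` just rescales `M̃` by `1/N`. -/

section FilterConjugation

variable {R : Type*} [CommRing R] [StarRing R] {a b c : Type*} [Fintype a] [Fintype b] [Fintype c]

theorem trace_kronecker_conj_mul (ρ : Matrix (a × b × c) (a × b × c) R)
    (F A : Matrix a a R) (G B : Matrix b b R) (H C : Matrix c c R) :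
    ((F ⊗ₖ (G ⊗ₖ H)) * ρ * (F ⊗ₖ (G ⊗ₖ H))ᴴ * (A ⊗ₖ (B ⊗ₖ C))).trace
      = (ρ * ((Fᴴ * A * F) ⊗ₖ ((Gᴴ * B * G) ⊗ₖ (Hᴴ * C * H)))).trace := by
  rw [Matrix.mul_assoc, Matrix.mul_assoc, trace_mul_comm, Matrix.mul_assoc,
    conjTranspose_kronecker, conjTranspose_kronecker]
  simp only [← mul_kronecker_mul]

theorem trace_kronecker_conj [DecidableEq a] [DecidableEq b] [DecidableEq c]
    (ρ : Matrix (a × b × c) (a × b × c) R) (F : Matrix a a R) (G : Matrix b b R)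
    (H : Matrix c c R) :
    ((F ⊗ₖ (G ⊗ₖ H)) * ρ * (F ⊗ₖ (G ⊗ₖ H))ᴴ).trace
      = (ρ * ((Fᴴ * F) ⊗ₖ ((Gᴴ * G) ⊗ₖ (Hᴴ * H)))).trace := by
  simpa [one_kronecker_one] using trace_kronecker_conj_mul ρ F 1 G 1 H 1

end FilterConjugation

theorem conjTranspose_diagonal_ofReal_one (x : ℝ) :
    (diagonal ![(x : ℂ), 1])ᴴ = diagonal ![(x : ℂ), 1] := by
  rw [diagonal_conjTranspose]
  congr 1
  ext i
  fin_cases i <;> simp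

theorem corrMat_ofReal_smul (r : ℝ)
    (ρ : Matrix (Fin 2 × Fin 2 × Fin 2) (Fin 2 × Fin 2 × Fin 2) ℂ) :
    corrMat ((r : ℂ) • ρ) = r • corrMat ρ := by
  ext j ik
  simp [corrMat, trace_smul]

theorem corrMat_kronecker_conj (ρ : Matrix (Fin 2 × Fin 2 × Fin 2) (Fin 2 × Fin 2 × Fin 2) ℂ)
    (F G H : Matrix (Fin 2) (Fin 2) ℂ) (i j k : Fin 3) :
    corrMat ((F ⊗ₖ (G ⊗ₖ H)) * ρ * (F ⊗ₖ (G ⊗ₖ H))ᴴ) j (i, k)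
      = (ρ * ((Fᴴ * pauli i * F) ⊗ₖ ((Gᴴ * pauli j * G) ⊗ₖ (Hᴴ * pauli k * H)))).trace.re := by
  rw [corrMat, trace_kronecker_conj_mul]

theorem trace_vecMulVec_ghz_mul (K : Matrix (Fin 2 × Fin 2 × Fin 2) (Fin 2 × Fin 2 × Fin 2) ℂ) :
    (vecMulVec ghz (star ghz) * K).trace
      = (K (0, 0, 0) (0, 0, 0) + K (0, 0, 0) (1, 1, 1) + K (1, 1, 1) (0, 0, 0)
          + K (1, 1, 1) (1, 1, 1)) / 2 := by
  have hsq : ((Real.sqrt 2 : ℂ))⁻¹ * (Real.sqrt 2 : ℂ)⁻¹ = 1 / 2 := by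
    rw [← mul_inv, ← Complex.ofReal_mul, Real.mul_self_sqrt zero_le_two]; norm_num
  simp only [trace, diag_apply, mul_apply, vecMulVec_apply, ghz, Fin.isValue, Prod.ext_iff,
    Complex.ofReal_inv, Pi.star_apply, RCLike.star_def, ite_mul, zero_mul, Finset.sum_ite_irrel,
    Fintype.sum_prod_type, Fin.sum_univ_two, and_true, zero_ne_one, and_false, or_false,
    one_ne_zero, false_or, ↓reduceIte, map_zero, mul_zero, add_zero, zero_add, map_inv₀,
    Complex.conj_ofReal, Finset.sum_const_zero]
  rw [hsq]
  ring

theorem trace_E00_kronecker_one_mul (A B C : Matrix (Fin 2) (Fin 2) ℂ) :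
    ((E00 ⊗ₖ (1 : Matrix (Fin 2 × Fin 2) (Fin 2 × Fin 2) ℂ)) * (A ⊗ₖ (B ⊗ₖ C))).trace
      = A 0 0 * (B.trace * C.trace) := by
  rw [← mul_kronecker_mul, Matrix.one_mul, trace_kronecker, trace_kronecker]
  simp [E00, trace, Fin.sum_univ_two, vecMul, dotProduct]

theorem trace_rhoGHZ_mul_kronecker (p : ℝ) (A B C : Matrix (Fin 2) (Fin 2) ℂ) :
    (rhoGHZ p * (A ⊗ₖ (B ⊗ₖ C))).trace
      = p * (A 0 0 * B 0 0 * C 0 0 + A 0 1 * B 0 1 * C 0 1 + A 1 0 * B 1 0 * C 1 0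
          + A 1 1 * B 1 1 * C 1 1) / 2
        + (1 - p) / 4 * (A 0 0 * (B.trace * C.trace)) := by
  rw [rhoGHZ, Matrix.add_mul, Matrix.smul_mul, Matrix.smul_mul, trace_add, trace_smul,
    trace_smul, trace_vecMulVec_ghz_mul, trace_E00_kronecker_one_mul]
  simp only [kroneckerMap_apply, smul_eq_mul]
  push_cast
  ring

-- Indexed like `corrMat`: entry `(m, (l, n))` is the paper's `M̃_{lmn}`.
def ghzPattern (a d : ℝ) : Matrix (Fin 3) (Fin 3 × Fin 3) ℝ :=
  fun m ln =>
    if (ln.1, m, ln.2) = (0, 0, 0) then a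
    else if (ln.1, m, ln.2) = (0, 1, 1) ∨ (ln.1, m, ln.2) = (1, 0, 1)
      ∨ (ln.1, m, ln.2) = (1, 1, 0) then -a
    else if (ln.1, m, ln.2) = (2, 2, 2) then d
    else 0

theorem smul_ghzPattern (r a d : ℝ) : r • ghzPattern a d = ghzPattern (r * a) (r * d) := by
  ext m ⟨l, n⟩
  simp only [ghzPattern, Matrix.smul_apply, smul_eq_mul]
  split_ifs <;> ring

theorem ghzPattern_mul_transpose (a d : ℝ) :
    ghzPattern a d * (ghzPattern a d)ᵀ = diagonal ![2 * a ^ 2, 2 * a ^ 2, d ^ 2] := by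
  ext i j
  fin_cases i <;> fin_cases j <;>
    simp [ghzPattern, mul_apply, Fintype.sum_prod_type, Fin.sum_univ_three] <;> ring

theorem charpoly_diagonal_fin_three {R : Type*} [CommRing R] (a b c : R) :
    (diagonal ![a, b, c]).charpoly = (X - C a) * (X - C b) * (X - C c) := by
  simp [charpoly_diagonal, Fin.prod_univ_three]

theorem re_trace_rhoGHZ_mul_filtered_pauli (p x y z : ℝ) (l m n : Fin 3) :
    (rhoGHZ p * ((diagonal ![(x : ℂ), 1] * pauli l * diagonal ![(x : ℂ), 1]) ⊗ₖ
        ((diagonal ![(y : ℂ), 1] * pauli m * diagonal ![(y : ℂ), 1]) ⊗ₖ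
          (diagonal ![(z : ℂ), 1] * pauli n * diagonal ![(z : ℂ), 1])))).trace.re
      = ghzPattern (p * x * y * z) (-(p / 2) + (1 - p) / 4 * x ^ 2 - (1 - p) / 4 * (x ^ 2 * y ^ 2)
          - (1 - p) / 4 * (x ^ 2 * z ^ 2) + (1 + p) / 4 * (x ^ 2 * y ^ 2 * z ^ 2)) m (l, n) := by
  rw [trace_rhoGHZ_mul_kronecker]
  fin_cases l <;> fin_cases m <;> fin_cases n <;>
    simp [ghzPattern, pauli, trace, Fin.sum_univ_two] <;> ring

theorem trace_filtered_rhoGHZ (p x y z : ℝ) :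
    ((diagonal ![(x : ℂ), 1] ⊗ₖ (diagonal ![(y : ℂ), 1] ⊗ₖ diagonal ![(z : ℂ), 1])) * rhoGHZ p
        * (diagonal ![(x : ℂ), 1] ⊗ₖ (diagonal ![(y : ℂ), 1] ⊗ₖ diagonal ![(z : ℂ), 1]))ᴴ).trace
      = ((p / 2 + (1 - p) / 4 * x ^ 2 + (1 - p) / 4 * (x ^ 2 * y ^ 2)
          + (1 - p) / 4 * (x ^ 2 * z ^ 2) + (1 + p) / 4 * (x ^ 2 * y ^ 2 * z ^ 2) : ℝ) : ℂ) := by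
  rw [trace_kronecker_conj, conjTranspose_diagonal_ofReal_one, conjTranspose_diagonal_ofReal_one,
    conjTranspose_diagonal_ofReal_one, trace_rhoGHZ_mul_kronecker]
  simp [trace, Fin.sum_univ_two]
  ring

theorem filtered_rhoGHZ_general (p x y z : ℝ)
    (FA FB FC : Matrix (Fin 2) (Fin 2) ℂ)
    (hFA : FA = Matrix.diagonal ![(x : ℂ), 1])
    (hFB : FB = Matrix.diagonal ![(y : ℂ), 1])
    (hFC : FC = Matrix.diagonal ![(z : ℂ), 1])
    (N D : ℝ)
    (hNdef : N = p / 2 + (1 - p) / 4 * x ^ 2 + (1 - p) / 4 * (x ^ 2 * y ^ 2)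
      + (1 - p) / 4 * (x ^ 2 * z ^ 2) + (1 + p) / 4 * (x ^ 2 * y ^ 2 * z ^ 2))
    (hDdef : D = -(p / 2) + (1 - p) / 4 * x ^ 2 - (1 - p) / 4 * (x ^ 2 * y ^ 2)
      - (1 - p) / 4 * (x ^ 2 * z ^ 2) + (1 + p) / 4 * (x ^ 2 * y ^ 2 * z ^ 2))
    (Mt : Matrix (Fin 3) (Fin 3 × Fin 3) ℝ)
    (hMt : ∀ (m : Fin 3) (l n : Fin 3),
      Mt m (l, n) = ((rhoGHZ p * ((FA * pauli l * FA) ⊗ₖ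
        ((FB * pauli m * FB) ⊗ₖ (FC * pauli n * FC)))).trace).re)
    (ρ' : Matrix (Fin 2 × Fin 2 × Fin 2) (Fin 2 × Fin 2 × Fin 2) ℂ)
    (hρ' : ρ' = ((N : ℂ))⁻¹ • ((FA ⊗ₖ (FB ⊗ₖ FC)) * rhoGHZ p * (FA ⊗ₖ (FB ⊗ₖ FC))ᴴ)) :
    ((FA ⊗ₖ (FB ⊗ₖ FC)) * rhoGHZ p * (FA ⊗ₖ (FB ⊗ₖ FC))ᴴ).trace = (N : ℂ)
    ∧ (∀ l m n : Fin 3,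
      Mt m (l, n) =
        if (l, m, n) = (0, 0, 0) then p * x * y * z
        else if (l, m, n) = (0, 1, 1) ∨ (l, m, n) = (1, 0, 1) ∨ (l, m, n) = (1, 1, 0) then
          -(p * x * y * z)
        else if (l, m, n) = (2, 2, 2) then D
        else 0)
    ∧ (Mt * Mtᵀ).charpoly
        = (X - C (2 * p ^ 2 * x ^ 2 * y ^ 2 * z ^ 2)) ^ 2 * (X - C (D ^ 2))
    ∧ (corrMat ρ' * (corrMat ρ')ᵀ).charpoly
        = (X - C ((Real.sqrt 2 * p * x * y * z / N) ^ 2)) ^ 2 * (X - C ((D / N) ^ 2)) := by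
  subst hFA hFB hFC
  have hMt_pattern : Mt = ghzPattern (p * x * y * z) D := by
    ext m ⟨l, n⟩
    rw [hMt, hDdef, re_trace_rhoGHZ_mul_filtered_pauli]
  have hMt_corrMat : corrMat ((diagonal ![(x : ℂ), 1] ⊗ₖ
      (diagonal ![(y : ℂ), 1] ⊗ₖ diagonal ![(z : ℂ), 1])) * rhoGHZ p
        * (diagonal ![(x : ℂ), 1] ⊗ₖ (diagonal ![(y : ℂ), 1] ⊗ₖ diagonal ![(z : ℂ), 1]))ᴴ)
      = Mt := by
    ext j ⟨i, k⟩
    rw [corrMat_kronecker_conj, conjTranspose_diagonal_ofReal_one,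
      conjTranspose_diagonal_ofReal_one, conjTranspose_diagonal_ofReal_one, hMt]
  have hcorr_pattern : corrMat ρ' = ghzPattern (p * x * y * z / N) (D / N) := by
    rw [hρ', ← Complex.ofReal_inv, corrMat_ofReal_smul, hMt_corrMat, hMt_pattern,
      smul_ghzPattern]
    congr 1 <;> ring
  have hsqrt : (Real.sqrt 2 * p * x * y * z / N) ^ 2 = 2 * (p * x * y * z / N) ^ 2 := by
    rw [show Real.sqrt 2 * p * x * y * z / N = Real.sqrt 2 * (p * x * y * z / N) by ring,
      mul_pow, Real.sq_sqrt zero_le_two]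
  refine ⟨by rw [trace_filtered_rhoGHZ, hNdef], fun l m n => by rw [hMt_pattern]; rfl, ?_, ?_⟩
  · rw [hMt_pattern, ghzPattern_mul_transpose, charpoly_diagonal_fin_three, ← sq,
      show 2 * (p * x * y * z) ^ 2 = 2 * p ^ 2 * x ^ 2 * y ^ 2 * z ^ 2 by ring]
  · rw [hcorr_pattern, ghzPattern_mul_transpose, charpoly_diagonal_fin_three, hsqrt, ← sq]

/-- Local filtering of `ρ(p)` with filters `diag(x,1), diag(y,1), diag(z,1)`:
the normalization factor, the entries of the filtered matrix `M̃`, the eigenvalues of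
`M̃ M̃ᵀ`, and the singular values of the correlation matrix of the filtered state. -/
theorem filtered_rhoGHZ (p x y z : ℝ) (hp0 : 0 < p) (hp1 : p ≤ 1)
    (hx : 0 < x) (hy : 0 < y) (hz : 0 < z)
    (FA FB FC : Matrix (Fin 2) (Fin 2) ℂ)
    (hFA : FA = Matrix.diagonal ![(x : ℂ), 1])
    (hFB : FB = Matrix.diagonal ![(y : ℂ), 1])
    (hFC : FC = Matrix.diagonal ![(z : ℂ), 1])
    (N D : ℝ)
    (hNdef : N = p / 2 + (1 - p) / 4 * x ^ 2 + (1 - p) / 4 * (x ^ 2 * y ^ 2)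
      + (1 - p) / 4 * (x ^ 2 * z ^ 2) + (1 + p) / 4 * (x ^ 2 * y ^ 2 * z ^ 2))
    (hDdef : D = -(p / 2) + (1 - p) / 4 * x ^ 2 - (1 - p) / 4 * (x ^ 2 * y ^ 2)
      - (1 - p) / 4 * (x ^ 2 * z ^ 2) + (1 + p) / 4 * (x ^ 2 * y ^ 2 * z ^ 2))
    (Mt : Matrix (Fin 3) (Fin 3 × Fin 3) ℝ)
    (hMt : ∀ (m : Fin 3) (l n : Fin 3),
      Mt m (l, n) = ((rhoGHZ p * ((FA * pauli l * FA) ⊗ₖ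
        ((FB * pauli m * FB) ⊗ₖ (FC * pauli n * FC)))).trace).re)
    (ρ' : Matrix (Fin 2 × Fin 2 × Fin 2) (Fin 2 × Fin 2 × Fin 2) ℂ)
    (hρ' : ρ' = ((N : ℂ))⁻¹ • ((FA ⊗ₖ (FB ⊗ₖ FC)) * rhoGHZ p * (FA ⊗ₖ (FB ⊗ₖ FC))ᴴ)) :
    ((FA ⊗ₖ (FB ⊗ₖ FC)) * rhoGHZ p * (FA ⊗ₖ (FB ⊗ₖ FC))ᴴ).trace = (N : ℂ)
    ∧ (∀ l m n : Fin 3,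
      Mt m (l, n) =
        if (l, m, n) = (0, 0, 0) then p * x * y * z
        else if (l, m, n) = (0, 1, 1) ∨ (l, m, n) = (1, 0, 1) ∨ (l, m, n) = (1, 1, 0) then
          -(p * x * y * z)
        else if (l, m, n) = (2, 2, 2) then D
        else 0)
    ∧ (Mt * Mtᵀ).charpoly
        = (X - C (2 * p ^ 2 * x ^ 2 * y ^ 2 * z ^ 2)) ^ 2 * (X - C (D ^ 2))
    ∧ (corrMat ρ' * (corrMat ρ')ᵀ).charpoly
        = (X - C ((Real.sqrt 2 * p * x * y * z / N) ^ 2)) ^ 2 * (X - C ((D / N) ^ 2)) :=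
  filtered_rhoGHZ_general p x y z FA FB FC hFA hFB hFC N D hNdef hDdef Mt hMt ρ' hρ'
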